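/- arXiv:1901.10025 — 3 statements merged into one kernel-verified Lean document; each statement's English description precedes it below -/
import Mathlib

section
/- Specializing the constrained minimization: $\inf\left(\tfrac12\|h\|_{\mathbf{H}_1}^2 : h(0)=0,\ h(1)=\tfrac{x^1}{\epsilon},\ \int_0^1 h(t)dt = \tfrac{x^2}{\epsilon^3}\right) = \frac{2(x^1)^2}{\epsilon^2} - \frac{6 x^1 x^2}{\epsilon^4} + \frac{6 (x^2)^2}{\epsilon^6}$ for every $\epsilon>0$ and $(x^1,x^2)\in\mathbb{R}^2$. -/
/-!
Both constraints are linear in the control `g = ḣ`: `∫ g = a` and, by Cauchy's formula for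
repeated integration, `∫ (1 - t) g t = b`, i.e. `∫ t g t = a - b`. Minimising `∫ g²` under them
is an orthogonal projection in `L²(0,1)` onto the affine functions: for the affine control `p`
meeting the constraints, `∫ g p` depends on `g` only through `a` and `b`, so `∫ g p = ∫ p²` and
`∫ g² = ∫ p² + ∫ (g - p)² ≥ ∫ p²`.
-/

open MeasureTheory

/-- `g` is the derivative of an admissible Cameron–Martin path `h` (with `h t = ∫_0^t g`)
satisfying the constraints `h(1) = a` and `∫_0^1 h(t) dt = b`. -/
def KolConstraint (a b : ℝ) (g : ℝ → ℝ) : Prop :=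
  IntegrableOn g (Set.Icc 0 1) ∧
  IntegrableOn (fun t => g t ^ 2) (Set.Icc 0 1) ∧
  (∫ t in (0:ℝ)..1, g t) = a ∧
  (∫ t in (0:ℝ)..1, ∫ s in (0:ℝ)..t, g s) = b

open Set

theorem integral_integral_eq_integral_sub_mul {g : ℝ → ℝ} {a b : ℝ}
    (hg : IntervalIntegrable g volume a b) :
    ∫ t in a..b, ∫ s in a..t, g s = ∫ t in a..b, (b - t) * g t := by
  have hG := hg.absolutelyContinuousOnInterval_intervalIntegral left_mem_uIcc
  have hF : AbsolutelyContinuousOnInterval (fun t => b - t) a b :=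
    (contDiffOn_const.sub contDiffOn_id).absolutelyContinuousOnInterval
  have hparts := hF.integral_mul_deriv_eq_deriv_mul hG
  have hderiv : ∫ t in a..b, (b - t) * deriv (fun x => ∫ s in a..x, g s) t
      = ∫ t in a..b, (b - t) * g t := by
    refine intervalIntegral.integral_congr_ae ?_
    filter_upwards [hg.ae_hasDerivAt_integral] with t ht htab
    rw [(ht (uIoc_subset_uIcc htab) a left_mem_uIcc).deriv]
  simp only [sub_self, zero_mul, intervalIntegral.integral_same, mul_zero, deriv_const_sub_id',
    neg_mul, one_mul, intervalIntegral.integral_neg, sub_neg_eq_add, zero_add] at hparts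
  rw [← hderiv, hparts]

theorem integral_sq_le_of_integral_mul_eq {g p : ℝ → ℝ} {a b : ℝ} (hab : a ≤ b)
    (hg : IntervalIntegrable g volume a b)
    (hg2 : IntervalIntegrable (fun t => g t ^ 2) volume a b)
    (hp : ContinuousOn p (uIcc a b)) (hgp : ∫ t in a..b, g t * p t = ∫ t in a..b, p t ^ 2) :
    ∫ t in a..b, p t ^ 2 ≤ ∫ t in a..b, g t ^ 2 := by
  have hgp_int : IntervalIntegrable (fun t => 2 * (g t * p t)) volume a b :=
    (hg.mul_continuousOn hp).const_mul 2
  have hp2_int : IntervalIntegrable (fun t => p t ^ 2) volume a b :=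
    (hp.pow 2).intervalIntegrable
  have hpythagoras : ∫ t in a..b, (g t - p t) ^ 2
      = (∫ t in a..b, g t ^ 2) - ∫ t in a..b, p t ^ 2 := by
    calc ∫ t in a..b, (g t - p t) ^ 2
        = ∫ t in a..b, (g t ^ 2 - 2 * (g t * p t) + p t ^ 2) := by congr 1; ext t; ring
      _ = (∫ t in a..b, g t ^ 2) - ∫ t in a..b, p t ^ 2 := by
        rw [intervalIntegral.integral_add (hg2.sub hgp_int) hp2_int,
          intervalIntegral.integral_sub hg2 hgp_int, intervalIntegral.integral_const_mul, hgp]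
        ring
  have hnonneg : 0 ≤ ∫ t in a..b, (g t - p t) ^ 2 :=
    intervalIntegral.integral_nonneg hab fun t _ => sq_nonneg _
  linarith

theorem integral_const_add_mul (α β : ℝ) : ∫ t in (0:ℝ)..1, (α + β * t) = α + β / 2 := by
  rw [intervalIntegral.integral_add intervalIntegrable_const
      (intervalIntegral.intervalIntegrable_id.const_mul β), intervalIntegral.integral_const_mul,
    intervalIntegral.integral_const, smul_eq_mul, integral_id]
  ring

theorem integral_mul_const_add_mul (α β : ℝ) :
    ∫ t in (0:ℝ)..1, t * (α + β * t) = α / 2 + β / 3 := by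
  have hexpand : (fun t : ℝ => t * (α + β * t)) = fun t => α * t + β * t ^ 2 := by
    ext t; ring
  rw [hexpand, intervalIntegral.integral_add (intervalIntegral.intervalIntegrable_id.const_mul α)
      ((intervalIntegral.intervalIntegrable_pow 2).const_mul β),
    intervalIntegral.integral_const_mul, intervalIntegral.integral_const_mul, integral_id,
    integral_pow]
  ring

theorem kolConstraint_iff {a b : ℝ} {g : ℝ → ℝ} :
    KolConstraint a b g ↔
      IntegrableOn g (Icc 0 1) ∧ IntegrableOn (fun t => g t ^ 2) (Icc 0 1) ∧
        ∫ t in (0:ℝ)..1, g t = a ∧ ∫ t in (0:ℝ)..1, t * g t = a - b := by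
  refine and_congr_right fun hg => and_congr_right fun _ => ?_
  have hgI : IntervalIntegrable g volume 0 1 :=
    (intervalIntegrable_iff_integrableOn_Icc_of_le zero_le_one).mpr hg
  have hrepeated : ∫ t in (0:ℝ)..1, ∫ s in (0:ℝ)..t, g s
      = (∫ t in (0:ℝ)..1, g t) - ∫ t in (0:ℝ)..1, t * g t := by
    rw [integral_integral_eq_integral_sub_mul hgI,
      ← intervalIntegral.integral_sub hgI (hgI.continuousOn_mul (continuousOn_id' _))]
    congr 1; ext t; ring
  rw [hrepeated]
  constructor <;> rintro ⟨rfl, h⟩ <;> exact ⟨rfl, by linarith⟩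

theorem KolConstraint.integral_mul_const_add_mul {a b : ℝ} {g : ℝ → ℝ}
    (h : KolConstraint a b g) (α β : ℝ) :
    ∫ t in (0:ℝ)..1, g t * (α + β * t) = α * a + β * (a - b) := by
  obtain ⟨hg, -, hmass, hmoment⟩ := kolConstraint_iff.mp h
  have hgI : IntervalIntegrable g volume 0 1 :=
    (intervalIntegrable_iff_integrableOn_Icc_of_le zero_le_one).mpr hg
  have hexpand : (fun t => g t * (α + β * t)) = fun t => α * g t + β * (t * g t) := by
    ext t; ring
  rw [hexpand, intervalIntegral.integral_add (hgI.const_mul α)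
      ((hgI.continuousOn_mul (continuousOn_id' _)).const_mul β),
    intervalIntegral.integral_const_mul, intervalIntegral.integral_const_mul, hmass, hmoment]

/-- Its coefficients solve the linear system `∫ p = a`, `∫ t p t = a - b`. -/
def kolOptimalControl (a b : ℝ) (t : ℝ) : ℝ := (6 * b - 2 * a) + (6 * a - 12 * b) * t

theorem continuous_kolOptimalControl (a b : ℝ) : Continuous (kolOptimalControl a b) := by
  unfold kolOptimalControl; fun_prop

theorem kolConstraint_kolOptimalControl (a b : ℝ) :
    KolConstraint a b (kolOptimalControl a b) := by
  refine kolConstraint_iff.mpr ⟨(continuous_kolOptimalControl a b).integrableOn_Icc,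
    ((continuous_kolOptimalControl a b).pow 2).integrableOn_Icc, ?_, ?_⟩
  · unfold kolOptimalControl; rw [integral_const_add_mul]; ring
  · unfold kolOptimalControl; rw [integral_mul_const_add_mul]; ring

theorem KolConstraint.integral_mul_kolOptimalControl {a b : ℝ} {g : ℝ → ℝ}
    (h : KolConstraint a b g) :
    ∫ t in (0:ℝ)..1, g t * kolOptimalControl a b t = 4 * a ^ 2 - 12 * a * b + 12 * b ^ 2 := by
  unfold kolOptimalControl
  rw [h.integral_mul_const_add_mul]
  ring

theorem kolOptimalControl_energy (a b : ℝ) :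
    (1 / 2) * ∫ t in (0:ℝ)..1, kolOptimalControl a b t ^ 2
      = 2 * a ^ 2 - 6 * a * b + 6 * b ^ 2 := by
  simp only [sq (kolOptimalControl a b _)]
  rw [(kolConstraint_kolOptimalControl a b).integral_mul_kolOptimalControl]
  ring

theorem KolConstraint.kolOptimalControl_energy_le {a b : ℝ} {g : ℝ → ℝ}
    (h : KolConstraint a b g) :
    2 * a ^ 2 - 6 * a * b + 6 * b ^ 2 ≤ (1 / 2) * ∫ t in (0:ℝ)..1, g t ^ 2 := by
  have hgp : ∫ t in (0:ℝ)..1, g t * kolOptimalControl a b t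
      = ∫ t in (0:ℝ)..1, kolOptimalControl a b t ^ 2 := by
    simp only [sq (kolOptimalControl a b _)]
    rw [h.integral_mul_kolOptimalControl,
      (kolConstraint_kolOptimalControl a b).integral_mul_kolOptimalControl]
  rw [← kolOptimalControl_energy]
  gcongr
  exact integral_sq_le_of_integral_mul_eq zero_le_one
    ((intervalIntegrable_iff_integrableOn_Icc_of_le zero_le_one).mpr h.1)
    ((intervalIntegrable_iff_integrableOn_Icc_of_le zero_le_one).mpr h.2.1)
    (continuous_kolOptimalControl a b).continuousOn hgp

theorem isLeast_kolConstraint_energy (a b : ℝ) :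
    IsLeast {E : ℝ | ∃ g : ℝ → ℝ, KolConstraint a b g ∧
        E = (1 / 2) * ∫ t in (0:ℝ)..1, g t ^ 2}
      (2 * a ^ 2 - 6 * a * b + 6 * b ^ 2) :=
  ⟨⟨kolOptimalControl a b, kolConstraint_kolOptimalControl a b,
      (kolOptimalControl_energy a b).symm⟩,
    fun _ ⟨_, hg, hE⟩ => hE ▸ hg.kolOptimalControl_energy_le⟩

theorem kolmogorov_control_energy_general (ε x1 x2 : ℝ) :
    sInf {E : ℝ | ∃ g : ℝ → ℝ, KolConstraint (x1 / ε) (x2 / ε ^ 3) g ∧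
        E = (1 / 2) * ∫ t in (0:ℝ)..1, g t ^ 2}
      = 2 * x1 ^ 2 / ε ^ 2 - 6 * x1 * x2 / ε ^ 4 + 6 * x2 ^ 2 / ε ^ 6 := by
  rw [(isLeast_kolConstraint_energy _ _).csInf_eq]
  ring

/-- The minimal control energy for the Kolmogorov diffusion approximation to reach
`(x¹, x²)`:
`inf((1/2)‖h‖² : h(0)=0, h(1)=x¹/ε, ∫_0^1 h = x²/ε³) = 2(x¹)²/ε² - 6x¹x²/ε⁴ + 6(x²)²/ε⁶`. -/
theorem kolmogorov_control_energy (ε x1 x2 : ℝ) (hε : 0 < ε) :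
    sInf {E : ℝ | ∃ g : ℝ → ℝ, KolConstraint (x1 / ε) (x2 / ε ^ 3) g ∧
        E = (1 / 2) * ∫ t in (0:ℝ)..1, g t ^ 2}
      = 2 * x1 ^ 2 / ε ^ 2 - 6 * x1 * x2 / ε ^ 4 + 6 * x2 ^ 2 / ε ^ 6 :=
  kolmogorov_control_energy_general ε x1 x2
end

section
/- $\inf\left(\tfrac12\|h\|_{\mathbf{H}_1}^2 : h\in\mathbf{H}_1,\ \int_0^1 h(s)\,ds \ge 1\right) = \tfrac32$, with the infimum attained at $h(t)=3t - \tfrac32 t^2$. -/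
/-!
Writing `h t = ∫₀ᵗ g`, integration by parts turns the constraint into
`∫₀¹ h = ∫₀¹ (1 - s) g(s) ds`, an inner product of `g` with `1 - s` in `L²[0, 1]`. Since `‖1 - s‖² = 1/3`, Cauchy–Schwarz gives
`(∫₀¹ h)² ≤ (1/3) ∫₀¹ g²`, so the constraint `∫₀¹ h ≥ 1` forces energy `(1/2) ∫₀¹ g² ≥ 3/2`,
with equality for `g` proportional to `1 - s`, namely `g = 3 - 3s`.
-/

open MeasureTheory Set

theorem intervalIntegral_integral_eq_integral_sub_mul {g : ℝ → ℝ} {a b : ℝ}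
    (hg : IntervalIntegrable g volume a b) :
    ∫ t in a..b, ∫ s in a..t, g s = ∫ s in a..b, (b - s) * g s := by
  have hF := hg.absolutelyContinuousOnInterval_intervalIntegral (c := a) left_mem_uIcc
  -- Integrate by parts against `t - b`; the primitive of `g` has derivative `g` almost everywhere.
  have hu : AbsolutelyContinuousOnInterval (fun t : ℝ => t - b) a b :=
    (contDiff_id.sub contDiff_const).contDiffOn.absolutelyContinuousOnInterval
  have hparts := hF.integral_mul_deriv_eq_deriv_mul hu
  simp only [deriv_sub_const, deriv_id'', mul_one, intervalIntegral.integral_same, sub_self,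
    mul_zero, zero_mul] at hparts
  rw [hparts, zero_sub, ← intervalIntegral.integral_neg]
  refine intervalIntegral.integral_congr_ae ?_
  filter_upwards [hg.ae_hasDerivAt_integral] with x hx hxab
  rw [(hx (uIoc_subset_uIcc hxab) a left_mem_uIcc).deriv]
  ring

theorem two_mul_integral_mul_le_integral_sq_add {α : Type*} [MeasurableSpace α] {μ : Measure α}
    {f g : α → ℝ} (hf : Integrable (fun x => f x ^ 2) μ) (hg : Integrable (fun x => g x ^ 2) μ)
    (hfg : Integrable (fun x => f x * g x) μ) (c : ℝ) :
    2 * c * ∫ x, f x * g x ∂μ ≤ ∫ x, g x ^ 2 ∂μ + c ^ 2 * ∫ x, f x ^ 2 ∂μ := by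
  rw [← integral_const_mul, ← integral_const_mul, ← integral_add hg (hf.const_mul _)]
  refine integral_mono (hfg.const_mul _) (hg.add (hf.const_mul _)) fun x => ?_
  nlinarith [sq_nonneg (g x - c * f x)]

theorem integral_one_sub_sq : ∫ s in (0:ℝ)..1, (1 - s) ^ 2 = 1 / 3 := by
  rw [intervalIntegral.integral_comp_sub_left (fun x => x ^ 2), integral_pow]
  norm_num

theorem three_mul_sq_integral_integral_le_integral_sq {g : ℝ → ℝ}
    (hg : IntervalIntegrable g volume 0 1)
    (hg2 : IntervalIntegrable (fun t => g t ^ 2) volume 0 1) :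
    3 * (∫ t in (0:ℝ)..1, ∫ s in (0:ℝ)..t, g s) ^ 2 ≤ ∫ t in (0:ℝ)..1, g t ^ 2 := by
  have hw : IntervalIntegrable (fun s : ℝ => (1 - s) ^ 2) volume 0 1 :=
    (continuous_const.sub continuous_id).pow 2 |>.intervalIntegrable 0 1
  have hwg : IntervalIntegrable (fun s => (1 - s) * g s) volume 0 1 :=
    hg.continuousOn_mul (continuous_const.sub continuous_id).continuousOn
  rw [intervalIntegrable_iff_integrableOn_Ioc_of_le zero_le_one] at hw hg2 hwg
  set m := ∫ t in (0:ℝ)..1, ∫ s in (0:ℝ)..t, g s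
  -- `c = 3 m` is the optimal choice, as `∫₀¹ (1 - s)² = 1/3`.
  have hquad := two_mul_integral_mul_le_integral_sq_add hw hg2 hwg (3 * m)
  simp only [← intervalIntegral.integral_of_le zero_le_one] at hquad
  rw [← intervalIntegral_integral_eq_integral_sub_mul hg, integral_one_sub_sq] at hquad
  nlinarith

theorem integral_three_sub_three_mul (t : ℝ) :
    ∫ s in (0:ℝ)..t, (3 - 3 * s) = 3 * t - 3 / 2 * t ^ 2 := by
  rw [intervalIntegral.integral_sub intervalIntegrable_const
    (intervalIntegral.intervalIntegrable_id.const_mul 3), intervalIntegral.integral_const_mul,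
    intervalIntegral.integral_const, integral_id, smul_eq_mul]
  ring

theorem integral_three_sub_three_mul_sq : ∫ t in (0:ℝ)..1, (3 - 3 * t) ^ 2 = 3 := by
  simp_rw [show ∀ t : ℝ, (3 - 3 * t) ^ 2 = 9 * (1 - t) ^ 2 by intro t; ring]
  rw [intervalIntegral.integral_const_mul, integral_one_sub_sq]
  norm_num

theorem integral_integral_three_sub_three_mul :
    ∫ t in (0:ℝ)..1, ∫ s in (0:ℝ)..t, (3 - 3 * s) = 1 := by
  rw [intervalIntegral_integral_eq_integral_sub_mul
    (intervalIntegrable_const.sub (intervalIntegral.intervalIntegrable_id.const_mul 3))]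
  simp_rw [show ∀ s : ℝ, (1 - s) * (3 - 3 * s) = 3 * (1 - s) ^ 2 by intro s; ring]
  rw [intervalIntegral.integral_const_mul, integral_one_sub_sq]
  norm_num

/-- `inf((1/2)‖h‖²_{H₁} : h ∈ H₁, ∫_0^1 h(s) ds ≥ 1) = 3/2`, attained at
`h(t) = 3t - (3/2)t²` (whose derivative is `g₀(t) = 3 - 3t`). The Cameron–Martin space is
encoded via derivatives `g`, with `h t = ∫_0^t g`. -/
theorem kolmogorov_halfspace_energy_attained :
    (IsLeast {E : ℝ | ∃ g : ℝ → ℝ,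
        IntegrableOn g (Set.Icc 0 1) ∧
        IntegrableOn (fun t => g t ^ 2) (Set.Icc 0 1) ∧
        (1:ℝ) ≤ (∫ t in (0:ℝ)..1, ∫ s in (0:ℝ)..t, g s) ∧
        E = (1 / 2) * ∫ t in (0:ℝ)..1, g t ^ 2}
      (3 / 2)) ∧
    (1 / 2) * (∫ t in (0:ℝ)..1, (3 - 3 * t) ^ 2) = 3 / 2 ∧
    (1:ℝ) ≤ (∫ t in (0:ℝ)..1, ∫ s in (0:ℝ)..t, (3 - 3 * s)) ∧
    ∀ t ∈ Set.Icc (0:ℝ) 1, (∫ s in (0:ℝ)..t, (3 - 3 * s)) = 3 * t - 3 / 2 * t ^ 2 := by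
  have henergy : (1 / 2) * (∫ t in (0:ℝ)..1, (3 - 3 * t) ^ 2) = 3 / 2 := by
    rw [integral_three_sub_three_mul_sq]
    norm_num
  have hconstraint := integral_integral_three_sub_three_mul.ge
  refine ⟨⟨?_, ?_⟩, henergy, hconstraint, fun t _ => integral_three_sub_three_mul t⟩
  · exact ⟨fun t => 3 - 3 * t, Continuous.integrableOn_Icc (by fun_prop),
      Continuous.integrableOn_Icc (by fun_prop), hconstraint, henergy.symm⟩
  · rintro E ⟨g, hg, hg2, hm, rfl⟩
    rw [← intervalIntegrable_iff_integrableOn_Icc_of_le zero_le_one] at hg hg2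
    nlinarith [three_mul_sq_integral_integral_le_integral_sq hg hg2]
end

section
/- The function $g(t) = \log\frac{\cosh^2\beta}{\cosh^2(\beta(1-t))}$ on $[0,1]$, with $\beta > 0$, satisfies the Euler–Lagrange equation $\ddot g(t) = \lambda e^{g(t)}$ with $\lambda = -2\beta^2/\cosh^2\beta$, together with $g(0)=0$ and $\dot g(1) = 0$; moreover $\int_0^1 e^{g(s)} ds = \frac{\sinh 2\beta}{2\beta}$ and $\tfrac12 \int_0^1 \dot g(s)^2 ds = 2\beta(\beta - \tanh\beta)$. -/
/-!
Since `g t = 2 log cosh β - 2 log cosh (β (1 - t))`, one has `ġ t = 2β tanh (β (1 - t))` and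
`g̈ t = -2β² / cosh² (β (1 - t)) = λ e^{g t}`. After the substitution `u = β (1 - t)` the two
integrals become `∫₀^β sech² = tanh β` and `∫₀^β tanh² = β - tanh β`.
-/

open Real

namespace Real

theorem hasDerivAt_tanh (x : ℝ) : HasDerivAt tanh (1 / cosh x ^ 2) x := by
  have h := (hasDerivAt_sinh x).div (hasDerivAt_cosh x) (cosh_pos x).ne'
  rw [show tanh = sinh / cosh from funext tanh_eq_sinh_div_cosh]
  refine h.congr_deriv ?_
  rw [← cosh_sq_sub_sinh_sq x]
  ring

theorem continuous_one_div_cosh_sq : Continuous fun x => 1 / cosh x ^ 2 :=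
  continuous_const.div (continuous_cosh.pow 2) fun x => (pow_pos (cosh_pos x) 2).ne'

theorem integral_one_div_cosh_sq (a b : ℝ) :
    ∫ x in a..b, 1 / cosh x ^ 2 = tanh b - tanh a :=
  intervalIntegral.integral_eq_sub_of_hasDerivAt (fun x _ => hasDerivAt_tanh x)
    (continuous_one_div_cosh_sq.intervalIntegrable a b)

theorem tanh_sq (x : ℝ) : tanh x ^ 2 = 1 - 1 / cosh x ^ 2 := by
  have := (cosh_pos x).ne'
  rw [tanh_eq_sinh_div_cosh, div_pow, sinh_sq]
  field_simp

theorem integral_tanh_sq (a b : ℝ) :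
    ∫ x in a..b, tanh x ^ 2 = b - a - (tanh b - tanh a) := by
  simp_rw [tanh_sq]
  rw [intervalIntegral.integral_sub intervalIntegrable_const, integral_one_div_cosh_sq,
    intervalIntegral.integral_const, smul_eq_mul, mul_one]
  exact continuous_one_div_cosh_sq.intervalIntegrable a b

end Real

theorem intervalIntegral.integral_comp_mul_one_sub (f : ℝ → ℝ) {c : ℝ} (hc : c ≠ 0) :
    ∫ s in (0 : ℝ)..1, f (c * (1 - s)) = c⁻¹ * ∫ u in (0 : ℝ)..c, f u := by
  simp_rw [mul_one_sub]
  rw [intervalIntegral.integral_comp_sub_mul f hc, smul_eq_mul]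
  simp

theorem hasDerivAt_const_mul_one_sub (c t : ℝ) :
    HasDerivAt (fun t : ℝ => c * (1 - t)) (-c) t := by
  simpa using ((hasDerivAt_id t).const_sub 1).const_mul c

noncomputable def eulerLagrangeSol (β t : ℝ) : ℝ :=
  log (cosh β ^ 2 / cosh (β * (1 - t)) ^ 2)

namespace eulerLagrangeSol

variable (β : ℝ)

theorem exp_eq (t : ℝ) : exp (eulerLagrangeSol β t) = cosh β ^ 2 / cosh (β * (1 - t)) ^ 2 :=
  exp_log (by positivity)

theorem eq_sub_log_cosh :
    eulerLagrangeSol β = fun t => 2 * log (cosh β) - 2 * log (cosh (β * (1 - t))) := by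
  funext t
  rw [eulerLagrangeSol, log_div (by positivity) (by positivity), log_pow, log_pow]
  push_cast
  rfl

theorem hasDerivAt (t : ℝ) :
    HasDerivAt (eulerLagrangeSol β) (2 * β * tanh (β * (1 - t))) t := by
  have hlog :=
    ((hasDerivAt_cosh _).comp t (hasDerivAt_const_mul_one_sub β t)).log (cosh_pos _).ne'
  rw [eq_sub_log_cosh]
  refine ((hlog.const_mul 2).const_sub _).congr_deriv ?_
  rw [tanh_eq_sinh_div_cosh, Function.comp_apply]
  ring

theorem deriv_eq : deriv (eulerLagrangeSol β) = fun t => 2 * β * tanh (β * (1 - t)) :=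
  funext fun t => (hasDerivAt β t).deriv

theorem hasDerivAt_deriv (t : ℝ) :
    HasDerivAt (deriv (eulerLagrangeSol β)) (-2 * β ^ 2 / cosh (β * (1 - t)) ^ 2) t := by
  rw [deriv_eq]
  have htanh := (hasDerivAt_tanh _).comp t (hasDerivAt_const_mul_one_sub β t)
  refine (htanh.const_mul (2 * β)).congr_deriv ?_
  ring

theorem deriv_deriv (t : ℝ) :
    deriv (deriv (eulerLagrangeSol β)) t
      = (-2 * β ^ 2 / cosh β ^ 2) * exp (eulerLagrangeSol β t) := by
  have := (cosh_pos β).ne'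
  rw [(hasDerivAt_deriv β t).deriv, exp_eq]
  field_simp

theorem deriv_one : deriv (eulerLagrangeSol β) 1 = 0 := by
  simp [deriv_eq]

variable {β}

theorem integral_exp (hβ : β ≠ 0) :
    ∫ s in (0 : ℝ)..1, exp (eulerLagrangeSol β s) = sinh (2 * β) / (2 * β) := by
  have := (cosh_pos β).ne'
  simp_rw [exp_eq, div_eq_mul_one_div (cosh β ^ 2)]
  rw [intervalIntegral.integral_const_mul,
    intervalIntegral.integral_comp_mul_one_sub (fun u => 1 / cosh u ^ 2) hβ,
    integral_one_div_cosh_sq, tanh_zero, tanh_eq_sinh_div_cosh, sinh_two_mul]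
  field_simp
  ring

theorem integral_deriv_sq (hβ : β ≠ 0) :
    ∫ s in (0 : ℝ)..1, deriv (eulerLagrangeSol β) s ^ 2 = 4 * β * (β - tanh β) := by
  simp_rw [deriv_eq, mul_pow]
  rw [intervalIntegral.integral_const_mul,
    intervalIntegral.integral_comp_mul_one_sub (fun u => tanh u ^ 2) hβ,
    integral_tanh_sq, tanh_zero]
  field_simp
  ring

end eulerLagrangeSol

/-- The function `g(t) = log(cosh²β / cosh²(β(1-t)))`, `β > 0`, satisfies the
Euler–Lagrange equation `g̈ = λ e^g` with `λ = -2β²/cosh²β`, the boundary conditions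
`g(0) = 0` and `ġ(1) = 0`, and `∫_0^1 e^g = sinh(2β)/(2β)`,
`(1/2)∫_0^1 ġ² = 2β(β - tanh β)`. -/
theorem solvable_euler_lagrange (β : ℝ) (hβ : 0 < β) :
    let g : ℝ → ℝ := fun t => Real.log (Real.cosh β ^ 2 / Real.cosh (β * (1 - t)) ^ 2)
    (∀ t : ℝ, deriv (deriv g) t
        = (-2 * β ^ 2 / Real.cosh β ^ 2) * Real.exp (g t)) ∧
    g 0 = 0 ∧
    deriv g 1 = 0 ∧
    (∫ s in (0:ℝ)..1, Real.exp (g s)) = Real.sinh (2 * β) / (2 * β) ∧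
    (1 / 2) * (∫ s in (0:ℝ)..1, deriv g s ^ 2) = 2 * β * (β - Real.tanh β) := by
  intro g
  have hg : g = eulerLagrangeSol β := rfl
  refine ⟨eulerLagrangeSol.deriv_deriv β, by simp [g], eulerLagrangeSol.deriv_one β,
    eulerLagrangeSol.integral_exp hβ.ne', ?_⟩
  rw [hg, eulerLagrangeSol.integral_deriv_sq hβ.ne']
  ring
end
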